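/- With w_k(m) defined by w_0 = 0 and w_{k+1}^2(m) = w_k^2(m) + (Σ_{l=1}^{m-1} (m-l)/(l^2 - w_k^2(m)))^{-1}, one has w_k^2(m+1) < w_k^2(m) for all m ≥ 3 and k ≥ 1. -/

import Mathlib

/-!
Write `F_m(s) = ∑_{l=1}^{m-1} (m - l) / (l² - s)`, so that `w_{k+1}² = g_m(w_k²)` with
`g_m(s) = s + 1 / F_m(s)`. On `s < 1` every term of `F_m` is positive, so the iterates stay
below `1`, and `F_m < F_{m+1}` gives `g_{m+1} < g_m`. The heart of the argument is that `g_m`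
is strictly increasing on `s < 1` for `m ≥ 3`: `F_m(t) - F_m(s)` is smaller than
`(t - s) F_m(s) F_m(t)` term by term, because `F_m(t)` already exceeds `1 / (1 - t)` through its
`l = 1` term. Comparing the two iterations step by step then yields the claim.
-/

open Finset

noncomputable def wilkinsonSum (m : ℕ) (s : ℝ) : ℝ :=
  ∑ l ∈ Ico 1 m, ((m : ℝ) - l) / ((l : ℝ) ^ 2 - s)

noncomputable def wilkinsonStep (m : ℕ) (s : ℝ) : ℝ :=
  s + (wilkinsonSum m s)⁻¹

theorem lt_of_iterate_lt_of_monotoneOn {α : Type*} [Preorder α] {S : Set α} {f g : α → α}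
    {a b : ℕ → α} (hfg : ∀ x ∈ S, f x < g x) (hg : MonotoneOn g S) (ha : ∀ k, a k ∈ S)
    (hb : ∀ k, b k ∈ S) (ha_succ : ∀ k, a (k + 1) = f (a k))
    (hb_succ : ∀ k, b (k + 1) = g (b k)) (h0 : a 0 ≤ b 0) (k : ℕ) :
    a (k + 1) < b (k + 1) := by
  have hstep : ∀ j, a j ≤ b j → a (j + 1) < b (j + 1) := fun j hj => by
    rw [ha_succ, hb_succ]
    exact (hfg _ (ha j)).trans_le (hg (ha j) (hb j) hj)
  induction k with
  | zero => exact hstep 0 h0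
  | succ k ih => exact hstep _ ih.le

section wilkinson

variable {m l : ℕ} {s t : ℝ}

theorem sq_sub_pos_of_lt_one (hl : 1 ≤ l) (hs : s < 1) : 0 < (l : ℝ) ^ 2 - s := by
  have : (1 : ℝ) ≤ l := by exact_mod_cast hl
  nlinarith

theorem wilkinsonSum_term_pos (hl : l ∈ Ico 1 m) (hs : s < 1) :
    0 < ((m : ℝ) - l) / ((l : ℝ) ^ 2 - s) := by
  rw [Finset.mem_Ico] at hl
  have : (l : ℝ) < m := by exact_mod_cast hl.2
  exact div_pos (by linarith) (sq_sub_pos_of_lt_one hl.1 hs)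

theorem wilkinsonSum_pos (hm : 2 ≤ m) (hs : s < 1) : 0 < wilkinsonSum m s :=
  sum_pos (fun _ hl => wilkinsonSum_term_pos hl hs) ⟨1, by simp; omega⟩

theorem inv_one_sub_lt_wilkinsonSum (hm : 3 ≤ m) (hs : s < 1) :
    (1 - s)⁻¹ < wilkinsonSum m s := by
  have hfirst : ((m : ℝ) - 1) / (1 - s) ≤ wilkinsonSum m s := by
    have := single_le_sum (fun l hl => (wilkinsonSum_term_pos (m := m) hl hs).le)
      (show 1 ∈ Ico 1 m by simp; omega)
    simpa [wilkinsonSum] using this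
  have hm' : (3 : ℝ) ≤ m := by exact_mod_cast hm
  calc (1 - s)⁻¹ = 1 / (1 - s) := (one_div _).symm
    _ < ((m : ℝ) - 1) / (1 - s) := by gcongr; linarith
    _ ≤ wilkinsonSum m s := hfirst

theorem wilkinsonSum_lt_succ (hm : 1 ≤ m) (hs : s < 1) :
    wilkinsonSum m s < wilkinsonSum (m + 1) s := by
  have hlast : 0 < (((m : ℝ) + 1) - m) / ((m : ℝ) ^ 2 - s) :=
    div_pos (by linarith) (sq_sub_pos_of_lt_one hm hs)
  have hterms : wilkinsonSum m s ≤ ∑ l ∈ Ico 1 m, (((m : ℝ) + 1) - l) / ((l : ℝ) ^ 2 - s) := by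
    refine sum_le_sum fun l hl => ?_
    gcongr
    · exact (sq_sub_pos_of_lt_one (Finset.mem_Ico.1 hl).1 hs).le
    · linarith
  simp only [wilkinsonSum] at hterms ⊢
  rw [sum_Ico_succ_top (by omega)]
  push_cast
  linarith

theorem wilkinsonSum_sub_lt (hm : 3 ≤ m) (hst : s < t) (ht : t < 1) :
    wilkinsonSum m t - wilkinsonSum m s < (t - s) * (wilkinsonSum m s * wilkinsonSum m t) := by
  have hs : s < 1 := hst.trans ht
  have hB : (1 - t)⁻¹ < wilkinsonSum m t := inv_one_sub_lt_wilkinsonSum hm ht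
  rw [wilkinsonSum.eq_1 m t, wilkinsonSum.eq_1 m s, ← sum_sub_distrib, mul_left_comm, sum_mul]
  refine sum_lt_sum_of_nonempty ⟨1, by simp; omega⟩ fun l hl => ?_
  have hds := sq_sub_pos_of_lt_one (Finset.mem_Ico.1 hl).1 hs
  have hdt := sq_sub_pos_of_lt_one (Finset.mem_Ico.1 hl).1 ht
  have hl1 : (1 : ℝ) ≤ l := by exact_mod_cast (Finset.mem_Ico.1 hl).1
  have hinv : ((l : ℝ) ^ 2 - t)⁻¹ < wilkinsonSum m t :=
    lt_of_le_of_lt (inv_anti₀ (by linarith) (by nlinarith)) hB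
  calc ((m : ℝ) - l) / ((l : ℝ) ^ 2 - t) - ((m : ℝ) - l) / ((l : ℝ) ^ 2 - s)
      = ((m : ℝ) - l) / ((l : ℝ) ^ 2 - s) * ((t - s) * ((l : ℝ) ^ 2 - t)⁻¹) := by
        field_simp
        ring
    _ < ((m : ℝ) - l) / ((l : ℝ) ^ 2 - s) * ((t - s) * wilkinsonSum m t) := by
        gcongr
        exact wilkinsonSum_term_pos hl hs

theorem wilkinsonStep_strictMonoOn (hm : 3 ≤ m) : StrictMonoOn (wilkinsonStep m) (Set.Iio 1) := by
  intro s hs t ht hst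
  have hA := wilkinsonSum_pos (m := m) (by omega) (Set.mem_Iio.1 hs)
  have hB := wilkinsonSum_pos (m := m) (by omega) (Set.mem_Iio.1 ht)
  have hkey := wilkinsonSum_sub_lt hm hst ht
  have hinv : (wilkinsonSum m s)⁻¹ - (wilkinsonSum m t)⁻¹ < t - s := by
    rw [inv_sub_inv hA.ne' hB.ne', div_lt_iff₀ (by positivity)]
    exact hkey
  unfold wilkinsonStep
  linarith

theorem wilkinsonStep_succ_lt (hm : 2 ≤ m) (hs : s < 1) :
    wilkinsonStep (m + 1) s < wilkinsonStep m s :=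
  add_lt_add_right (inv_strictAnti₀ (wilkinsonSum_pos hm hs) (wilkinsonSum_lt_succ (by omega) hs)) s

theorem wilkinsonStep_lt_one (hm : 3 ≤ m) (hs : s < 1) : wilkinsonStep m s < 1 := by
  have := inv_lt_of_inv_lt₀ (by linarith) (inv_one_sub_lt_wilkinsonSum hm hs)
  unfold wilkinsonStep
  linarith

end wilkinson

theorem stmt_16 (w : ℕ → ℕ → ℝ) (hw0 : ∀ m, 3 ≤ m → w m 0 = 0)
    (hrec : ∀ m, 3 ≤ m → ∀ k, (w m (k + 1)) ^ 2 = (w m k) ^ 2 +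
      (∑ l ∈ Finset.Ico 1 m, ((m : ℝ) - l) / ((l : ℝ) ^ 2 - (w m k) ^ 2))⁻¹) :
    ∀ m, 3 ≤ m → ∀ k, 1 ≤ k → (w (m + 1) k) ^ 2 < (w m k) ^ 2 := by
  have hstep : ∀ m, 3 ≤ m → ∀ k, w m (k + 1) ^ 2 = wilkinsonStep m (w m k ^ 2) := hrec
  have hlt_one : ∀ m, 3 ≤ m → ∀ k, w m k ^ 2 ∈ Set.Iio 1 := by
    intro m hm k
    induction k with
    | zero => simp [hw0 m hm]
    | succ k ih => rw [hstep m hm]; exact wilkinsonStep_lt_one hm ih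
  intro m hm k hk
  obtain ⟨k, rfl⟩ : ∃ j, k = j + 1 := ⟨k - 1, by omega⟩
  exact lt_of_iterate_lt_of_monotoneOn (a := fun k => w (m + 1) k ^ 2) (b := fun k => w m k ^ 2)
    (fun s hs => wilkinsonStep_succ_lt (by omega) hs)
    (wilkinsonStep_strictMonoOn hm).monotoneOn (hlt_one (m + 1) (by omega)) (hlt_one m hm)
    (hstep (m + 1) (by omega)) (hstep m hm) (by simp [hw0 m hm, hw0 (m + 1) (by omega)]) k
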